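/- (Closed-form minimizer for the penalized objective.) Fix α ∈ ℝ^k and β ∈ ℝ^m, and let γ = γ(α,β). The binary vector z* defined by z*_j = 1 if (η/4)γ_j² > θ and z*_j = 0 otherwise minimizes z ↦ H(z, α, β) over {0,1}^n, and the minimum value equals −⟨β,b⟩ − (1/4)‖α‖₂² + Σ_{j=1}^n min(0, θ − (η/4)γ_j²). -/

import Mathlib

open Matrix Finset

noncomputable def gam {n k m : ℕ} (V : Matrix (Fin n) (Fin k) ℝ) (lam : Fin k → ℝ)
    (c : Fin n → ℝ) (A : Matrix (Fin m) (Fin n) ℝ) (α : Fin k → ℝ) (β : Fin m → ℝ) :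
    Fin n → ℝ :=
  c + V.mulVec (fun i => Real.sqrt (lam i) * α i) + Aᵀ.mulVec β

noncomputable def Hfun {n k m : ℕ} (V : Matrix (Fin n) (Fin k) ℝ) (lam : Fin k → ℝ)
    (c : Fin n → ℝ) (A : Matrix (Fin m) (Fin n) ℝ) (b : Fin m → ℝ) (η θ : ℝ)
    (z : Fin n → ℝ) (α : Fin k → ℝ) (β : Fin m → ℝ) : ℝ :=
  θ * (∑ j, z j) - (β ⬝ᵥ b) - (1/4) * (∑ i, (α i)^2)
    - (η/4) * (∑ j, z j * (gam V lam c A α β j)^2)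

/-- closed-form minimizer of `z ↦ H(z,α,β)` over `{0,1}^n`. -/
theorem stmt15
    (n k m : ℕ) (hn : 1 ≤ n) (hk1 : 1 ≤ k) (hkn : k ≤ n)
    (θ : ℝ) (hθ : 0 < θ)
    (lam : Fin k → ℝ) (hlam : ∀ i, 0 ≤ lam i)
    (V : Matrix (Fin n) (Fin k) ℝ) (c : Fin n → ℝ)
    (A : Matrix (Fin m) (Fin n) ℝ) (b : Fin m → ℝ) (η : ℝ) (hη : 0 < η)
    (α : Fin k → ℝ) (β : Fin m → ℝ)
    (γ : Fin n → ℝ) (hγ : γ = gam V lam c A α β)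
    (zstar : Fin n → ℝ)
    (hzstar : ∀ j, zstar j = if θ < (η/4) * (γ j)^2 then (1:ℝ) else 0) :
    (∀ j, zstar j = 0 ∨ zstar j = 1)
    ∧ (∀ z : Fin n → ℝ, (∀ j, z j = 0 ∨ z j = 1) →
        Hfun V lam c A b η θ zstar α β ≤ Hfun V lam c A b η θ z α β)
    ∧ Hfun V lam c A b η θ zstar α β
        = -(β ⬝ᵥ b) - (1/4) * (∑ i, (α i)^2)
          + ∑ j, min 0 (θ - (η/4) * (γ j)^2) := by

  have key : ∀ z : Fin n → ℝ, Hfun V lam c A b η θ z α β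
      = -(β ⬝ᵥ b) - (1/4) * (∑ i, (α i)^2)
        + ∑ j, z j * (θ - (η/4) * (γ j)^2) := by
    intro z
    rw [Hfun, ← hγ,
      show (∑ j, z j * (θ - η/4 * γ j ^ 2)) = θ * (∑ j, z j) - η/4 * ∑ j, z j * γ j ^ 2 by
        rw [Finset.mul_sum, Finset.mul_sum, ← Finset.sum_sub_distrib]
        exact Finset.sum_congr rfl fun j _ => by ring]
    ring
  have hstar : ∀ j, zstar j * (θ - (η/4) * (γ j)^2) = min 0 (θ - (η/4) * (γ j)^2) := by
    intro j
    rw [hzstar j]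
    by_cases h : θ < (η/4) * (γ j)^2
    · rw [if_pos h, one_mul, min_eq_right (by linarith)]
    · rw [if_neg h, zero_mul, min_eq_left (by push_neg at h; linarith)]
  refine ⟨fun j => ?_, fun z hz => ?_, ?_⟩
  · rw [hzstar j]; by_cases h : θ < (η/4) * (γ j)^2 <;> simp [h]
  · rw [key, key]
    exact add_le_add_right (Finset.sum_le_sum fun j _ => by
      rw [hstar j]; rcases hz j with h | h <;> simp [h, min_le_iff]) _
  · rw [key]
    congr 1
    exact Finset.sum_congr rfl fun j _ => hstar j
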